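/- arXiv:0710.5838 — 3 statements merged into one kernel-verified Lean document; each statement's English description precedes it below -/
import Mathlib

section
/- Every coset of a subgroup of D is cut out by generating equations: for every subgroup H of D = {−1,+1}^m and every a ∈ D, letting L = {α ∈ Fin m → ZMod 2 : X^α(h) = 1 for all h ∈ H} (which is a subgroup of the additive group (ZMod 2)^m), one has a • H = {t ∈ D : X^α(t) = X^α(a) for all α ∈ L}. -/
open Pointwise

/-- The monomial `X^γ` on the full factorial design `D = {-1,+1}^m`:
`X^γ(t) = ∏_{i : γ i = 1} t i`. -/
def Xmon {m : ℕ} (γ : Fin m → ZMod 2) (t : Fin m → ℤˣ) : ℤˣ :=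
  ∏ i ∈ Finset.univ.filter (fun i => γ i = 1), t i

/-
In additive coordinates `D ≅ (ℤ/2)^m` the monomial `X^α` becomes the linear form `v ↦ α ⬝ᵥ v`,
so `L` is the annihilator of the subspace corresponding to `H`. A subspace of a
finite-dimensional space is the common zero set of the linear forms vanishing on it, hence
`H = {t : X^α(t) = 1 for all α ∈ L}`; apply this to `a⁻¹ * t`.
-/

theorem Submodule.mem_of_forall_dotProduct_eq_zero {F ι : Type*} [Field F] [Fintype ι]
    [DecidableEq ι] (K : Submodule F (ι → F)) {v : ι → F}
    (hv : ∀ α : ι → F, (∀ w ∈ K, α ⬝ᵥ w = 0) → α ⬝ᵥ v = 0) : v ∈ K := by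
  by_contra hvK
  obtain ⟨f, hfv, hfK⟩ := K.exists_dual_map_eq_bot_of_notMem hvK inferInstance
  have hf : ∀ w, f w = (dotProductEquiv F ι).symm f ⬝ᵥ w := fun w => by
    rw [← dotProductEquiv_apply_apply, LinearEquiv.apply_symm_apply]
  refine hfv ((hf v).trans (hv _ fun w hw => ?_))
  rw [← hf, ← Submodule.mem_bot F, ← hfK]
  exact Submodule.mem_map_of_mem hw

def Int.unitsMulEquivZModTwo : ℤˣ ≃* Multiplicative (ZMod 2) where
  toFun u := .ofAdd (if u = 1 then 0 else 1)
  invFun c := if c = 1 then 1 else -1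
  left_inv := by decide
  right_inv := by decide
  map_mul' := by decide

namespace Xmon

variable {m : ℕ}

def designEquiv (m : ℕ) : (Fin m → ℤˣ) ≃* Multiplicative (Fin m → ZMod 2) :=
  (MulEquiv.piCongrRight fun _ => Int.unitsMulEquivZModTwo).trans
    (MulEquiv.piMultiplicative _).symm

theorem unitsMulEquivZModTwo_apply (α : Fin m → ZMod 2) (t : Fin m → ℤˣ) :
    Int.unitsMulEquivZModTwo (Xmon α t) = .ofAdd (α ⬝ᵥ (designEquiv m t).toAdd) := by
  rw [Xmon, map_prod, ← ofAdd_toAdd (∏ _ ∈ _, _), toAdd_prod, Finset.sum_filter]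
  congr 1
  refine Finset.sum_congr rfl fun i _ => ?_
  have ite_eq_mul : ∀ c x : ZMod 2, (if c = 1 then x else 0) = c * x := by decide
  exact ite_eq_mul _ _

theorem eq_one_iff (α : Fin m → ZMod 2) (t : Fin m → ℤˣ) :
    Xmon α t = 1 ↔ α ⬝ᵥ (designEquiv m t).toAdd = 0 := by
  rw [← Int.unitsMulEquivZModTwo.map_eq_one_iff, unitsMulEquivZModTwo_apply, ofAdd_eq_one]

theorem map_mul (α : Fin m → ZMod 2) (t s : Fin m → ℤˣ) :
    Xmon α (t * s) = Xmon α t * Xmon α s :=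
  Finset.prod_mul_distrib

theorem map_inv (α : Fin m → ZMod 2) (t : Fin m → ℤˣ) : Xmon α t⁻¹ = (Xmon α t)⁻¹ :=
  Finset.prod_inv_distrib _

theorem add_apply (α β : Fin m → ZMod 2) (t : Fin m → ℤˣ) :
    Xmon (α + β) t = Xmon α t * Xmon β t := by
  apply Int.unitsMulEquivZModTwo.injective
  simp only [_root_.map_mul, unitsMulEquivZModTwo_apply, add_dotProduct, ofAdd_add]

def annihilator (H : Subgroup (Fin m → ℤˣ)) : AddSubgroup (Fin m → ZMod 2) where
  carrier := {α | ∀ h ∈ H, Xmon α h = 1}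
  add_mem' hα hβ h hh := by rw [add_apply, hα h hh, hβ h hh, one_mul]
  zero_mem' h _ := by simp [eq_one_iff]
  neg_mem' {α} hα := by rwa [show -α = α from funext fun i => ZMod.neg_eq_self_mod_two (α i)]

theorem mem_of_forall_annihilator_eq_one {H : Subgroup (Fin m → ℤˣ)} {t : Fin m → ℤˣ}
    (ht : ∀ α ∈ annihilator H, Xmon α t = 1) : t ∈ H := by
  let K : Submodule (ZMod 2) (Fin m → ZMod 2) :=
    AddSubgroup.toZModSubmodule 2 (H.comap (designEquiv m).symm.toMonoidHom).toAddSubgroup'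
  have mem_K : ∀ s, (designEquiv m s).toAdd ∈ K ↔ s ∈ H := by simp [K]
  rw [← mem_K]
  refine K.mem_of_forall_dotProduct_eq_zero fun α hα => ?_
  rw [← eq_one_iff]
  exact ht α fun h hh => (eq_one_iff α h).2 (hα _ ((mem_K h).2 hh))

end Xmon

/-- Every coset of a subgroup of `D = {-1,+1}^m` is cut out by generating
equations: with `L = {α : X^α(h) = 1 for all h ∈ H}` (a subgroup of `(ZMod 2)^m`),
one has `a • H = {t : X^α(t) = X^α(a) for all α ∈ L}`. -/
theorem coset_eq_gen_eq (m : ℕ) (H : Subgroup (Fin m → ℤˣ)) (a : Fin m → ℤˣ) :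
    (∃ L : AddSubgroup (Fin m → ZMod 2),
        (L : Set (Fin m → ZMod 2)) = {α | ∀ h ∈ H, Xmon α h = 1}) ∧
    a • (H : Set (Fin m → ℤˣ)) =
      {t | ∀ α : Fin m → ZMod 2, (∀ h ∈ H, Xmon α h = 1) → Xmon α t = Xmon α a} := by
  refine ⟨⟨Xmon.annihilator H, rfl⟩, Set.ext fun t => ?_⟩
  rw [mem_leftCoset_iff, SetLike.mem_coe, Set.mem_ofPred_eq]
  have quotient_eq : ∀ α, Xmon α (a⁻¹ * t) = (Xmon α a)⁻¹ * Xmon α t := fun α => by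
    rw [Xmon.map_mul, Xmon.map_inv]
  constructor
  · intro ht α hα
    rw [eq_comm, ← inv_mul_eq_one, ← quotient_eq]
    exact hα _ ht
  · intro ht
    refine Xmon.mem_of_forall_annihilator_eq_one fun α hα => ?_
    rw [quotient_eq, inv_mul_eq_one]
    exact (ht α hα).symm
end

section
/- A nonempty fraction F ⊆ D = {−1,+1}^m is a coset of a subgroup of D if and only if there exist a subgroup L of the additive group (ZMod 2)^m and a map e : L → ℤˣ such that for every t ∈ D, (1/|L|) · Σ_{α ∈ L} (e(α) · X^α(t) : ℝ) equals 1 if t ∈ F and 0 otherwise. (Equivalence of the coset characterization and the indicator-function characterization of regular fractions.) -/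
/-!
Send `±1` to `0/1 ∈ ZMod 2`; this identifies `D` with `(ZMod 2)^m` and turns `X^γ(t)` into
`(-1)^(γ ⬝ᵥ t)`. Nondegeneracy of the dot product gives `H^⊥⊥ = H`, i.e. every subgroup `H ≤ D` is
the common kernel of the monomials `X^α`, `α ∈ H^⊥`. For `F = a • H` take `L = H^⊥` and
`e(α) = X^α(a)`: the sum becomes `∑_{α ∈ L} X^α(a t)`, a character sum over `L`, which is `|L|` if
`a t ∈ H` and `0` otherwise. Conversely, at a point `a ∈ F` the average of the `±1` values
`e(α) X^α(a)` equals `1`, which forces `e(α) = X^α(a)`; the same character sum then shows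
`F = a • L^⊥`.
-/

open Pointwise
open scoped Classical

open Matrix

section

lemma units_int_eq_one_of_sum_eq_card {ι : Type*} [Fintype ι] (f : ι → ℤˣ)
    (h : ∑ i, ((f i : ℤ) : ℝ) = Fintype.card ι) (i : ι) : f i = 1 := by
  by_contra hi
  have hlt : ∑ i, ((f i : ℤ) : ℝ) < ∑ _i : ι, 1 := by
    refine Finset.sum_lt_sum (fun j _ => ?_) ⟨i, Finset.mem_univ i, ?_⟩
    · rcases Int.units_eq_one_or (f j) with hf | hf <;> simp [hf]
    · simp [Int.units_ne_iff_eq_neg.mp hi]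
  simp [h] at hlt

def unitsIntEquivZModTwo : ℤˣ ≃* Multiplicative (ZMod 2) where
  toFun u := .ofAdd (if u = 1 then 0 else 1)
  invFun z := (-1) ^ z.toAdd.val
  left_inv := by decide
  right_inv := by decide
  map_mul' := by decide

variable {m : ℕ}

variable (m) in
def expVec : Additive (Fin m → ℤˣ) ≃+ (Fin m → ZMod 2) :=
  MulEquiv.toAdditive <| (MulEquiv.piCongrRight fun _ => unitsIntEquivZModTwo).trans
    (MulEquiv.funMultiplicative (Fin m) (ZMod 2)).symm

lemma expVec_apply (t : Fin m → ℤˣ) (i : Fin m) :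
    expVec m (.ofMul t) i = (unitsIntEquivZModTwo (t i)).toAdd := rfl

lemma unitsIntEquivZModTwo_Xmon (γ : Fin m → ZMod 2) (t : Fin m → ℤˣ) :
    unitsIntEquivZModTwo (Xmon γ t) = .ofAdd (γ ⬝ᵥ expVec m (.ofMul t)) := by
  rw [Xmon, map_prod, ← ofAdd_toAdd (∏ _ ∈ _, _), toAdd_prod, Finset.sum_filter]
  congr 1
  refine Finset.sum_congr rfl fun i _ => ?_
  rw [expVec_apply]
  rcases (by decide : ∀ x : ZMod 2, x = 0 ∨ x = 1) (γ i) with h | h <;> simp [h]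

lemma Xmon_eq_one_iff (γ : Fin m → ZMod 2) (t : Fin m → ℤˣ) :
    Xmon γ t = 1 ↔ γ ⬝ᵥ expVec m (.ofMul t) = 0 := by
  rw [← unitsIntEquivZModTwo.injective.eq_iff, unitsIntEquivZModTwo_Xmon, map_one,
    ofAdd_eq_one]

lemma Xmon_zero (t : Fin m → ℤˣ) : Xmon 0 t = 1 := by
  simp [Xmon]

lemma Xmon_add (γ δ : Fin m → ZMod 2) (t : Fin m → ℤˣ) :
    Xmon (γ + δ) t = Xmon γ t * Xmon δ t := by
  apply unitsIntEquivZModTwo.injective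
  simp only [map_mul, unitsIntEquivZModTwo_Xmon, add_dotProduct, ofAdd_add]

lemma Xmon_mul (γ : Fin m → ZMod 2) (s t : Fin m → ℤˣ) :
    Xmon γ (s * t) = Xmon γ s * Xmon γ t := by
  simp [Xmon, Finset.prod_mul_distrib]

lemma Xmon_one (γ : Fin m → ZMod 2) : Xmon γ 1 = 1 := by
  simp [Xmon]

lemma inv_eq_self_of_units_int (t : Fin m → ℤˣ) : t⁻¹ = t :=
  funext fun i => Int.units_inv_eq_self (t i)

lemma mem_smul_set_iff_mul_mem (a t : Fin m → ℤˣ) (S : Set (Fin m → ℤˣ)) :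
    t ∈ a • S ↔ a * t ∈ S := by
  rw [Set.mem_smul_set_iff_inv_smul_mem, inv_eq_self_of_units_int, smul_eq_mul]

def annihilator (H : Subgroup (Fin m → ℤˣ)) : AddSubgroup (Fin m → ZMod 2) where
  carrier := {α | ∀ t ∈ H, Xmon α t = 1}
  zero_mem' t _ := Xmon_zero t
  add_mem' hα hβ t ht := by rw [Xmon_add, hα t ht, hβ t ht, one_mul]
  neg_mem' {α} hα := by
    rwa [show -α = α from funext fun i => ZMod.neg_eq_self_mod_two (α i)]

def coannihilator (L : AddSubgroup (Fin m → ZMod 2)) : Subgroup (Fin m → ℤˣ) where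
  carrier := {t | ∀ α ∈ L, Xmon α t = 1}
  one_mem' α _ := Xmon_one α
  mul_mem' hs ht α hα := by rw [Xmon_mul, hs α hα, ht α hα, one_mul]
  inv_mem' {t} ht := by rwa [inv_eq_self_of_units_int]

lemma mem_coannihilator {L : AddSubgroup (Fin m → ZMod 2)} {t : Fin m → ℤˣ} :
    t ∈ coannihilator L ↔ ∀ α ∈ L, Xmon α t = 1 := Iff.rfl

variable (m) in
def dotForm : LinearMap.BilinForm (ZMod 2) (Fin m → ZMod 2) := dotProductBilin (ZMod 2) (ZMod 2)

lemma dotForm_apply (x y : Fin m → ZMod 2) : dotForm m x y = x ⬝ᵥ y := rfl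

lemma dotForm_isRefl : (dotForm m).IsRefl := fun x y h => by
  rwa [dotForm_apply, dotProduct_comm, ← dotForm_apply]

lemma dotForm_nondegenerate : (dotForm m).Nondegenerate :=
  dotForm_isRefl.nondegenerate_iff_separatingLeft.mpr fun x hx => dotProduct_eq_zero x hx

lemma coannihilator_annihilator (H : Subgroup (Fin m → ℤˣ)) :
    coannihilator (annihilator H) = H := by
  refine le_antisymm (fun t ht => ?_) fun t ht α hα => hα t ht
  let W := AddSubgroup.toZModSubmodule 2 ((Subgroup.toAddSubgroup H).map (expVec m).toAddMonoidHom)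
  have hW : ∀ s, expVec m (.ofMul s) ∈ W ↔ s ∈ H := fun s => by
    simp [W]
  have : expVec m (.ofMul t) ∈ (dotForm m).orthogonal ((dotForm m).orthogonal W) := by
    refine (LinearMap.BilinForm.mem_orthogonal_iff).mpr fun β hβ => ?_
    have hβH : β ∈ annihilator H := fun s hs => (Xmon_eq_one_iff β s).mpr <| by
      rw [dotProduct_comm, ← dotForm_apply]
      exact LinearMap.BilinForm.mem_orthogonal_iff.mp hβ _ ((hW s).mpr hs)
    exact (Xmon_eq_one_iff β t).mp (ht β hβH)
  rwa [LinearMap.BilinForm.orthogonal_orthogonal dotForm_nondegenerate dotForm_isRefl, hW] at this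

noncomputable def monomialChar (t : Fin m → ℤˣ) : AddChar (Fin m → ZMod 2) ℝ where
  toFun γ := ((Xmon γ t : ℤ) : ℝ)
  map_zero_eq_one' := by simp [Xmon_zero]
  map_add_eq_mul' γ δ := by simp [Xmon_add]

lemma sum_Xmon_eq_ite (L : AddSubgroup (Fin m → ZMod 2)) (t : Fin m → ℤˣ) :
    ∑ α : L, ((Xmon α t : ℤ) : ℝ) = if t ∈ coannihilator L then (Nat.card L : ℝ) else 0 := by
  rw [Nat.card_eq_fintype_card]
  convert AddChar.sum_eq_ite ((monomialChar t).compAddMonoidHom L.subtype) using 2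
  · rfl
  · rw [AddChar.eq_zero_iff, mem_coannihilator, Subtype.forall]
    simp [monomialChar]

lemma mean_Xmon_mul_Xmon (L : AddSubgroup (Fin m → ZMod 2)) (a t : Fin m → ℤˣ) :
    (1 / (Nat.card L : ℝ)) * ∑ᶠ α : L, ((Xmon α a : ℤ) : ℝ) * ((Xmon α t : ℤ) : ℝ) =
      if a * t ∈ coannihilator L then 1 else 0 := by
  simp_rw [finsum_eq_sum_of_fintype, ← Int.cast_mul, ← Units.val_mul, ← Xmon_mul, sum_Xmon_eq_ite]
  split_ifs
  · field_simp
  · simp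

lemma eq_Xmon_of_mean_eq_one {L : AddSubgroup (Fin m → ZMod 2)} {e : L → ℤˣ} {a : Fin m → ℤˣ}
    (h : (1 / (Nat.card L : ℝ)) * ∑ᶠ α : L, ((e α : ℤ) : ℝ) * ((Xmon α a : ℤ) : ℝ) = 1)
    (α : L) : e α = Xmon α a := by
  have hsum : ∑ α : L, (((e α * Xmon α a : ℤˣ) : ℤ) : ℝ) = Fintype.card L := by
    rw [finsum_eq_sum_of_fintype] at h
    push_cast
    rw [← Nat.card_eq_fintype_card]
    field_simp at h
    linarith
  rw [eq_inv_of_mul_eq_one_left (units_int_eq_one_of_sum_eq_card _ hsum α), Int.units_inv_eq_self]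

end

/-- A nonempty fraction `F ⊆ D = {-1,+1}^m` is regular (a coset of a subgroup
of `D`) if and only if there are a subgroup `L` of `(ZMod 2)^m` and a map
`e : L → {-1,+1}` such that `(1/|L|) ∑_{α ∈ L} e(α) X^α` is the indicator
function of `F`. -/
theorem regular_iff_indicator (m : ℕ) (F : Set (Fin m → ℤˣ)) (hF : F.Nonempty) :
    (∃ (a : Fin m → ℤˣ) (H : Subgroup (Fin m → ℤˣ)),
        F = a • (H : Set (Fin m → ℤˣ))) ↔
    ∃ (L : AddSubgroup (Fin m → ZMod 2)) (e : L → ℤˣ),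
      ∀ t : Fin m → ℤˣ,
        (1 / (Nat.card L : ℝ)) *
            ∑ᶠ α : L, ((e α : ℤ) : ℝ) * ((Xmon (α : Fin m → ZMod 2) t : ℤ) : ℝ) =
          if t ∈ F then 1 else 0 := by
  constructor
  · rintro ⟨a, H, rfl⟩
    refine ⟨annihilator H, fun α => Xmon α a, fun t => ?_⟩
    simp only [mean_Xmon_mul_Xmon, coannihilator_annihilator, mem_smul_set_iff_mul_mem,
      SetLike.mem_coe]
  · rintro ⟨L, e, hind⟩
    obtain ⟨a, ha⟩ := hF
    obtain rfl : e = fun α : L => Xmon α a :=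
      funext (eq_Xmon_of_mean_eq_one (by simpa [ha] using hind a))
    refine ⟨a, coannihilator L, Set.ext fun t => ?_⟩
    have := hind t
    rw [mean_Xmon_mul_Xmon] at this
    rw [mem_smul_set_iff_mul_mem, SetLike.mem_coe]
    split_ifs at this <;> simp_all
end

section
/- (Necessary condition for inclusion.) Let F ⊆ D = {−1,+1}^m be a fraction with indicator coefficients b_β = 2^{−m} · Σ_{t ∈ F} (X^β(t) : ℝ), let α_1, …, α_k ∈ Fin m → ZMod 2 be linearly independent over ZMod 2 and e_1, …, e_k ∈ {−1,+1}. If the regular fraction R = {t ∈ D : X^{α_j}(t) = e_j for all j = 1,…,k} is contained in F, then Σ_{S ⊆ {1,…,k}} |b_{Σ_{j ∈ S} α_j}| ≥ 1, where the sum runs over all subsets S of {1,…,k} (the empty set contributing |b_0| = b_0). -/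
/-!
The regular fraction `R` has indicator `2⁻ᵏ ∏ⱼ (1 + e_j X^{α_j})`, and expanding the product
gives `2⁻ᵏ ∑_S e_S X^{α_S}` with `e_S = ∏_{j ∈ S} e_j` and `α_S = ∑_{j ∈ S} α_j`. Summing the
product over `F ⊇ R` is the same as summing it over all of `D`. Over `D` only `S = ∅` survives,
because linear independence makes `α_S ≠ 0` for `S ≠ ∅` and a nontrivial character sums to zero.
Over `F` the sum is `2^m ∑_S e_S b_{α_S}`. Hence `∑_S e_S b_{α_S} = 1`, and the triangle
inequality with `|e_S| = 1` gives the bound.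
-/

open Finset

theorem sum_intCast_units_hom_eq_zero {G R : Type*} [Group G] [Fintype G] [CommRing R]
    [IsDomain R] [CharZero R] (χ : G →* ℤˣ) (hχ : χ ≠ 1) : ∑ g, ((χ g : ℤ) : R) = 0 := by
  refine sum_hom_units_eq_zero ((Int.castRingHom R).toMonoidHom.comp ((Units.coeHom ℤ).comp χ)) ?_
  contrapose! hχ
  ext g
  simpa using DFunLike.congr_fun hχ g

namespace Xmon
variable {m : ℕ}

theorem eq_prod_uzpow (γ : Fin m → ZMod 2) (t : Fin m → ℤˣ) :
    Xmon γ t = ∏ i, t i ^ γ i := by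
  rw [Xmon, prod_filter]
  refine prod_congr rfl fun i _ => ?_
  rcases eq_or_ne (γ i) 0 with h | h
  · simp [h]
  · have h1 : γ i = 1 := Fin.eq_one_of_ne_zero _ h
    simp [h1]

theorem zero_left (t : Fin m → ℤˣ) : Xmon 0 t = 1 := by
  simp [eq_prod_uzpow]

theorem add_left (γ δ : Fin m → ZMod 2) (t : Fin m → ℤˣ) :
    Xmon (γ + δ) t = Xmon γ t * Xmon δ t := by
  simp only [eq_prod_uzpow, Pi.add_apply, uzpow_add, prod_mul_distrib]

theorem sum_left {ι : Type*} (α : ι → Fin m → ZMod 2) (S : Finset ι) (t : Fin m → ℤˣ) :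
    Xmon (∑ j ∈ S, α j) t = ∏ j ∈ S, Xmon (α j) t := by
  induction S using Finset.cons_induction with
  | empty => simp [zero_left]
  | cons a s ha ih => rw [sum_cons, prod_cons, add_left, ih]

def hom (γ : Fin m → ZMod 2) : (Fin m → ℤˣ) →* ℤˣ where
  toFun := Xmon γ
  map_one' := by simp [eq_prod_uzpow]
  map_mul' t t' := by simp only [eq_prod_uzpow, Pi.mul_apply, mul_uzpow, prod_mul_distrib]

theorem hom_ne_one {γ : Fin m → ZMod 2} (hγ : γ ≠ 0) : hom γ ≠ 1 := by
  obtain ⟨i, hi⟩ := Function.ne_iff.mp hγ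
  have hi1 : γ i = 1 := Fin.eq_one_of_ne_zero _ hi
  intro h
  have := DFunLike.congr_fun h (Pi.mulSingle i (-1))
  simp [hom, eq_prod_uzpow, Pi.mulSingle_apply, hi1] at this

theorem sum_eq_zero {γ : Fin m → ZMod 2} (hγ : γ ≠ 0) :
    ∑ t, ((Xmon γ t : ℤ) : ℝ) = 0 :=
  sum_intCast_units_hom_eq_zero (hom γ) (hom_ne_one hγ)

end Xmon

theorem LinearIndependent.sum_ne_zero {R M ι : Type*} [Ring R] [Nontrivial R] [AddCommGroup M]
    [Module R M] {v : ι → M} (hv : LinearIndependent R v) {S : Finset ι} (hS : S.Nonempty) :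
    ∑ i ∈ S, v i ≠ 0 := by
  obtain ⟨i, hi⟩ := hS
  intro h
  have := linearIndependent_iff'.mp hv S (fun _ => 1) (by simpa using h) i hi
  exact one_ne_zero this

section RegularFraction

variable {m : ℕ} {ι : Type*} [Fintype ι] (α : ι → Fin m → ZMod 2) (e : ι → ℤˣ)

/-- `2 ^ card ι` times the indicator function of the regular fraction
`{t | ∀ j, Xmon (α j) t = e j}`. -/
def regularWeight (t : Fin m → ℤˣ) : ℝ :=
  ∏ j, (1 + (((e j * Xmon (α j) t : ℤˣ) : ℤ) : ℝ))

theorem regularWeight_eq_zero {t : Fin m → ℤˣ} {j : ι} (hj : Xmon (α j) t ≠ e j) :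
    regularWeight α e t = 0 := by
  refine prod_eq_zero (mem_univ j) ?_
  rcases Int.units_eq_one_or (e j) with he | he <;>
    rcases Int.units_eq_one_or (Xmon (α j) t) with hx | hx <;> simp_all

theorem regularWeight_eq_sum (t : Fin m → ℤˣ) :
    regularWeight α e t =
      ∑ S : Finset ι, (((∏ j ∈ S, e j : ℤˣ) : ℤ) : ℝ) * ((Xmon (∑ j ∈ S, α j) t : ℤ) : ℝ) := by
  rw [regularWeight, prod_one_add, powerset_univ]
  refine sum_congr rfl fun S _ => ?_
  rw [Xmon.sum_left, ← Int.cast_mul, ← Units.val_mul, ← prod_mul_distrib]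
  push_cast
  rfl

theorem sum_regularWeight (F : Finset (Fin m → ℤˣ)) :
    ∑ t ∈ F, regularWeight α e t =
      ∑ S : Finset ι,
        (((∏ j ∈ S, e j : ℤˣ) : ℤ) : ℝ) * ∑ t ∈ F, ((Xmon (∑ j ∈ S, α j) t : ℤ) : ℝ) := by
  simp only [regularWeight_eq_sum, mul_sum]
  exact sum_comm

theorem sum_univ_regularWeight (hα : LinearIndependent (ZMod 2) α) :
    ∑ t, regularWeight α e t = 2 ^ m := by
  rw [sum_regularWeight, sum_eq_single ∅]
  · simp [Xmon.zero_left]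
  · intro S _ hS
    rw [Xmon.sum_eq_zero (hα.sum_ne_zero (nonempty_iff_ne_empty.mpr hS)), mul_zero]
  · simp

end RegularFraction

theorem abs_intCast_units {R : Type*} [Ring R] [LinearOrder R] [IsOrderedRing R] (u : ℤˣ) :
    |((u : ℤ) : R)| = 1 := by
  rcases Int.units_eq_one_or u with rfl | rfl <;> simp

/-- Necessary condition for inclusion of a regular fraction: if the regular
fraction `R = {t : X^{α_j}(t) = e_j for all j}` (with `α_1, …, α_k` linearly
independent) is contained in `F`, then
`∑_{S ⊆ {1,…,k}} |b_{∑_{j ∈ S} α_j}| ≥ 1`. -/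
theorem regular_subset_necessary (m k : ℕ) (F : Finset (Fin m → ℤˣ))
    (b : (Fin m → ZMod 2) → ℝ)
    (hb : ∀ β, b β = (1 / 2 ^ m : ℝ) * ∑ t ∈ F, ((Xmon β t : ℤ) : ℝ))
    (α : Fin k → Fin m → ZMod 2) (hα : LinearIndependent (ZMod 2) α)
    (e : Fin k → ℤˣ)
    (hsub : {t : Fin m → ℤˣ | ∀ j, Xmon (α j) t = e j} ⊆ (F : Set (Fin m → ℤˣ))) :
    1 ≤ ∑ S : Finset (Fin k), |b (∑ j ∈ S, α j)| := by
  have hF : ∑ t ∈ F, regularWeight α e t = ∑ t, regularWeight α e t :=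
    sum_subset (subset_univ F) fun t _ ht => by
      obtain ⟨j, hj⟩ : ∃ j, Xmon (α j) t ≠ e j := by contrapose! ht; exact hsub ht
      exact regularWeight_eq_zero α e hj
  have hcoef : ∑ S : Finset (Fin k), (((∏ j ∈ S, e j : ℤˣ) : ℤ) : ℝ) * b (∑ j ∈ S, α j) = 1 := by
    have hXb : ∀ β, ∑ t ∈ F, ((Xmon β t : ℤ) : ℝ) = 2 ^ m * b β := fun β => by
      rw [hb]; field_simp
    rw [sum_univ_regularWeight α e hα, sum_regularWeight] at hF
    simp only [hXb, mul_left_comm _ ((2 : ℝ) ^ m), ← mul_sum] at hF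
    exact (mul_eq_left₀ (by positivity)).mp hF
  calc 1 = ∑ S : Finset (Fin k), (((∏ j ∈ S, e j : ℤˣ) : ℤ) : ℝ) * b (∑ j ∈ S, α j) := hcoef.symm
    _ ≤ ∑ S : Finset (Fin k), |b (∑ j ∈ S, α j)| := by
      refine sum_le_sum fun S _ => (le_abs_self _).trans_eq ?_
      rw [abs_mul, abs_intCast_units, one_mul]
end
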